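/- Let H be a connected finite simple block graph and let B be a block of H with vertex set V(B) = {u_1, u_2, …, u_k}. For each 1 ≤ i ≤ k, let G_i denote the connected component containing u_i of the subgraph of H induced by (V(H) ∖ V(B)) ∪ {u_i}, and for S ⊆ V(H) write S_i = S ∩ V(G_i). Let S ⊆ V(H) be such that the induced subgraph H[S ∖ {u_1}] has a perfect matching. Then for each 2 ≤ i ≤ k, either G_i[S_i] has a perfect matching, or u_i ∈ S_i and G_i[S_i ∖ {u_i}] has a perfect matching. Moreover, if S is in addition a dominating set of H, then for each 2 ≤ i ≤ k the set S_i dominates every vertex of V(G_i) ∖ ({u_i} ∪ S_i). -/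

import Mathlib

open SimpleGraph

variable {V : Type*}

/-- `S` is a dominating set of `G`. -/
def Dominating (G : SimpleGraph V) (S : Set V) : Prop :=
  ∀ v ∉ S, ∃ u ∈ S, G.Adj v u

/-- Within the subgraph of `G` induced by `A` (for `S ⊆ A`), the set `S` dominates
every vertex of `A \ S`. -/
def DominatingOn (G : SimpleGraph V) (A S : Set V) : Prop :=
  ∀ v ∈ A, v ∉ S → ∃ w ∈ S, G.Adj v w

/-- The induced subgraph `G[S]` has a perfect matching, i.e. there is a matching of `G`
whose vertex set is exactly `S`. -/
def HasPerfectMatchingOn (G : SimpleGraph V) (S : Set V) : Prop :=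
  ∃ M : G.Subgraph, M.verts = S ∧ M.IsMatching

/-- `S` is a paired-dominating set of `G`. -/
def PairedDominating (G : SimpleGraph V) (S : Set V) : Prop :=
  Dominating G S ∧ HasPerfectMatchingOn G S

/-- `v` is a cut vertex: deleting it disconnects the graph. -/
def IsCutVertex (G : SimpleGraph V) (v : V) : Prop :=
  ¬ (G.induce ({v}ᶜ : Set V)).Preconnected

/-- The graph has no cut vertex. -/
def HasNoCutVertex (G : SimpleGraph V) : Prop :=
  ∀ v : V, ¬ IsCutVertex G v

/-- `B` is a block of `G`: a maximal vertex set inducing a connected subgraph with no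
cut vertex. -/
def IsBlock (G : SimpleGraph V) (B : Set V) : Prop :=
  (G.induce B).Connected ∧ HasNoCutVertex (G.induce B) ∧
    ∀ B' : Set V, B ⊆ B' → (G.induce B').Connected → HasNoCutVertex (G.induce B') → B' = B

/-- `G` is a block graph: every block is a complete subgraph. -/
def IsBlockGraph (G : SimpleGraph V) : Prop :=
  ∀ B : Set V, IsBlock G B → B.Pairwise G.Adj

/-- The vertex set of the connected component containing `u` of the subgraph of `G`
induced by `A`. -/
def componentOf (G : SimpleGraph V) (A : Set V) (u : V) : Set V :=
  {v | ∃ (hu : u ∈ A) (hv : v ∈ A), (G.induce A).Reachable ⟨u, hu⟩ ⟨v, hv⟩}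

/-!
Let `a ∈ B` and let `C` be the component of `a` in `H[(V ∖ B) ∪ {a}]`. No vertex of `C` other
than `a` has a neighbour outside `C`: an edge from `C ∖ {a}` to `w ∈ B ∖ {a}` gives a path from
`a` to `w` through `C`, and a clique with such a path attached has no cut vertex, contradicting
the maximality of the block `B`. Consequently a perfect matching of `H[S ∖ {u₁}]` restricts to
`C = G_i` except possibly for the edge at `u_i`, and every vertex of `G_i ∖ {u_i}` has its
dominator inside `G_i`.
-/

namespace SimpleGraph

variable {G : SimpleGraph V}

lemma preconnected_induce_of_pairwise_adj {s : Set V} (hs : s.Pairwise G.Adj) :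
    (G.induce s).Preconnected := by
  rintro ⟨a, ha⟩ ⟨b, hb⟩
  by_cases hab : a = b
  · subst hab; rfl
  · exact Adj.reachable (hs ha hb hab)

lemma exists_isPath_of_reachable_induce {s : Set V} {a b : V} {ha : a ∈ s} {hb : b ∈ s}
    (h : (G.induce s).Reachable ⟨a, ha⟩ ⟨b, hb⟩) :
    ∃ p : G.Walk a b, p.IsPath ∧ ∀ x ∈ p.support, x ∈ s := by
  classical
  obtain ⟨q⟩ := h
  refine ⟨q.toPath.1.map (Embedding.induce (G := G) s).toHom,
    q.toPath.2.map (Embedding.induce (G := G) s).injective, fun x hx => ?_⟩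
  obtain ⟨y, -, rfl⟩ := List.mem_map.mp (Walk.support_map _ _ ▸ hx)
  exact y.2

/-- Since `c` visits `x` at most once, one of the two halves of `c` split at `v` misses it. -/
lemma Walk.IsPath.exists_walk_to_end_avoiding {a b v x : V} {c : G.Walk a b} (hc : c.IsPath)
    (hv : v ∈ c.support) (hxv : x ≠ v) :
    ∃ e ∈ ({a, b} : Set V), ∃ p : G.Walk v e, x ∉ p.support ∧ ∀ t ∈ p.support, t ∈ c.support := by
  classical
  by_cases hx : x ∈ (c.takeUntil v hv).support
  · refine ⟨b, Or.inr rfl, c.dropUntil v hv, fun hx' => ?_,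
      fun t ht => c.support_dropUntil_subset_support hv ht⟩
    have hnd := hc.support_nodup
    rw [← c.take_spec hv, Walk.support_append] at hnd
    have hx'' : x ∈ (c.dropUntil v hv).support.tail := by
      rw [← Walk.cons_tail_support] at hx'
      exact (List.mem_cons.mp hx').resolve_left hxv
    exact List.disjoint_of_nodup_append hnd hx hx''
  · exact ⟨a, Or.inl rfl, (c.takeUntil v hv).reverse, by simpa using hx,
      fun t ht => c.support_takeUntil_subset_support hv (by simpa using ht)⟩

lemma hasNoCutVertex_induce_of_forall_preconnected {s : Set V}
    (h : ∀ x ∈ s, (G.induce (s \ {x})).Preconnected) : HasNoCutVertex (G.induce s) := by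
  intro x hcut
  apply hcut
  let f : G.induce (s \ {x.1}) →g (G.induce s).induce ({x}ᶜ : Set s) :=
    { toFun := fun y => ⟨⟨y.1, y.2.1⟩, fun h => y.2.2 (congrArg Subtype.val h)⟩
      map_rel' := id }
  refine (h x.1 x.2).map f ?_
  rintro ⟨⟨y, hy⟩, hyx⟩
  exact ⟨⟨y, hy, fun h => hyx (Subtype.ext h)⟩, rfl⟩

lemma connected_induce_union_support {B : Set V} (hB : B.Pairwise G.Adj) {a b : V} (ha : a ∈ B)
    (c : G.Walk a b) : (G.induce (B ∪ {x | x ∈ c.support})).Connected :=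
  induce_union_connected (preconnected_induce_of_pairwise_adj hB)
    c.connected_induce_support.preconnected ⟨a, ha, c.start_mem_support⟩

lemma hasNoCutVertex_induce_union_support {B : Set V} (hB : B.Pairwise G.Adj) {a b : V}
    (ha : a ∈ B) (hb : b ∈ B) (hab : a ≠ b) {c : G.Walk a b} (hc : c.IsPath) :
    HasNoCutVertex (G.induce (B ∪ {x | x ∈ c.support})) := by
  refine hasNoCutVertex_induce_of_forall_preconnected fun x _ => ?_
  obtain ⟨z, hzB, hzx⟩ : ∃ z ∈ B, z ≠ x := by
    by_cases hxa : x = a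
    · exact ⟨b, hb, fun h => hab (hxa ▸ h).symm⟩
    · exact ⟨a, ha, Ne.symm hxa⟩
  have hK : (G.induce (B \ {x})).Preconnected :=
    preconnected_induce_of_pairwise_adj (hB.mono Set.sdiff_subset)
  refine (induce_connected_of_patches (s := (B ∪ {x | x ∈ c.support}) \ {x}) z ⟨Or.inl hzB, hzx⟩
    fun {v} hv => ?_).preconnected
  obtain ⟨hv | hv, hvx⟩ := hv
  · exact ⟨B \ {x}, Set.sdiff_subset_sdiff_left Set.subset_union_left, ⟨hzB, hzx⟩, ⟨hv, hvx⟩,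
      hK _ _⟩
  · obtain ⟨e, he, p, hxp, hpc⟩ := hc.exists_walk_to_end_avoiding hv (Ne.symm hvx)
    have heB : e ∈ B := by rcases he with rfl | rfl <;> assumption
    have hex : e ≠ x := fun h => hxp (h ▸ p.end_mem_support)
    refine ⟨B \ {x} ∪ {t | t ∈ p.support}, ?_, Or.inl ⟨hzB, hzx⟩, Or.inr p.start_mem_support,
      (induce_union_connected hK p.connected_induce_support.preconnected
        ⟨e, ⟨heB, hex⟩, p.end_mem_support⟩).preconnected _ _⟩
    rintro t (ht | ht)
    · exact Set.sdiff_subset_sdiff_left Set.subset_union_left ht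
    · exact ⟨Or.inr (hpc t ht), fun h => hxp (h ▸ ht)⟩

lemma Subgraph.IsMatching.hasPerfectMatchingOn {M : G.Subgraph} (hM : M.IsMatching)
    {T : Set V} (hT : T ⊆ M.verts) (hcl : ∀ v ∈ T, ∀ w, M.Adj v w → w ∈ T) :
    HasPerfectMatchingOn G T := by
  refine ⟨M.induce T, rfl, fun v hv => ?_⟩
  obtain ⟨w, hvw, hw⟩ := hM (hT hv)
  exact ⟨w, ⟨hv, hcl v hv w hvw, hvw⟩, fun y hy => hw y hy.2.2⟩

end SimpleGraph

section

variable {G : SimpleGraph V}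

lemma IsBlock.support_subset_of_isPath {B : Set V} (hB : IsBlock G B) (hK : B.Pairwise G.Adj)
    {a b : V} (ha : a ∈ B) (hb : b ∈ B) (hab : a ≠ b) {c : G.Walk a b} (hc : c.IsPath) :
    ∀ x ∈ c.support, x ∈ B := by
  have hmax := hB.2.2 _ Set.subset_union_left (connected_induce_union_support hK ha c)
    (hasNoCutVertex_induce_union_support hK ha hb hab hc)
  exact fun x hx => hmax ▸ Or.inr hx

lemma componentOf_subset (A : Set V) (a : V) : componentOf G A a ⊆ A :=
  fun _ ⟨_, hv, _⟩ => hv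

lemma IsBlock.mem_componentOf_of_adj {B : Set V} (hB : IsBlock G B) (hK : B.Pairwise G.Adj)
    {a v w : V} (ha : a ∈ B) (hv : v ∈ componentOf G (Bᶜ ∪ {a}) a) (hva : v ≠ a) (hvw : G.Adj v w) :
    w ∈ componentOf G (Bᶜ ∪ {a}) a := by
  obtain ⟨haA, hvA, hav⟩ := hv
  by_cases hwA : w ∈ Bᶜ ∪ {a}
  · exact ⟨haA, hwA, hav.trans (show (G.induce _).Adj ⟨v, hvA⟩ ⟨w, hwA⟩ from hvw).reachable⟩
  exfalso
  obtain ⟨hwa, hwB⟩ : w ≠ a ∧ w ∈ B := by simpa [not_or] using hwA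
  obtain ⟨q, hq, hqA⟩ := exists_isPath_of_reachable_induce hav
  have hc : (q.concat hvw).IsPath := hq.concat (fun hw => hwA (hqA w hw)) hvw
  have hvB := hB.support_subset_of_isPath hK ha hwB (Ne.symm hwa) hc v
    (by simp [Walk.support_concat])
  exact hva (hvA.resolve_left (not_not_intro hvB))

lemma HasPerfectMatchingOn.inter_or_diff {T C : Set V} {a : V} (hT : HasPerfectMatchingOn G T)
    (hC : ∀ v ∈ C, v ≠ a → ∀ w, G.Adj v w → w ∈ C) :
    HasPerfectMatchingOn G (T ∩ C) ∨
      (a ∈ T ∩ C ∧ HasPerfectMatchingOn G ((T ∩ C) \ {a})) := by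
  obtain ⟨M, rfl, hM⟩ := hT
  have hMC : ∀ v ∈ C, v ≠ a → ∀ w, M.Adj v w → w ∈ M.verts ∩ C :=
    fun v hv hva w hvw => ⟨M.edge_vert hvw.symm, hC v hv hva w (M.adj_sub hvw)⟩
  by_cases hclosed : ∀ v ∈ M.verts ∩ C, ∀ w, M.Adj v w → w ∈ C
  · exact Or.inl (hM.hasPerfectMatchingOn Set.inter_subset_left
      fun v hv w hvw => ⟨M.edge_vert hvw.symm, hclosed v hv w hvw⟩)
  push Not at hclosed
  obtain ⟨v, ⟨hvM, hvC⟩, b, hvb, hbC⟩ := hclosed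
  obtain rfl : v = a := by_contra fun hva => hbC (hMC v hvC hva b hvb).2
  refine Or.inr ⟨⟨hvM, hvC⟩, hM.hasPerfectMatchingOn (fun x hx => hx.1.1) ?_⟩
  rintro x ⟨⟨-, hxC⟩, hxv⟩ w hxw
  refine ⟨hMC x hxC hxv w hxw, fun hwv => hbC ?_⟩
  rw [Set.mem_singleton_iff] at hwv
  subst hwv
  exact hM.eq_of_adj_left hxw.symm hvb ▸ hxC

end

theorem stmt_8 {V : Type*} (H : SimpleGraph V)
    (hbg : IsBlockGraph H) (B : Set V) (hB : IsBlock H B)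
    (k : ℕ) (hk : 0 < k) (u : Fin k → V) (huinj : Function.Injective u)
    (hurange : Set.range u = B)
    (G' : Fin k → Set V) (hG' : ∀ i : Fin k, G' i = componentOf H (Bᶜ ∪ {u i}) (u i))
    (S : Set V) (hpm : HasPerfectMatchingOn H (S \ {u ⟨0, hk⟩})) :
    (∀ i : Fin k, i ≠ ⟨0, hk⟩ →
      HasPerfectMatchingOn H (S ∩ G' i) ∨
        (u i ∈ S ∩ G' i ∧ HasPerfectMatchingOn H ((S ∩ G' i) \ {u i}))) ∧
    (Dominating H S → ∀ i : Fin k, i ≠ ⟨0, hk⟩ →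
      ∀ v ∈ G' i, v ∉ S ∩ G' i → v ≠ u i → ∃ w ∈ S ∩ G' i, H.Adj v w) := by
  have hmemB : ∀ i, u i ∈ B := fun i => hurange ▸ Set.mem_range_self i
  have hclosed : ∀ i, ∀ v ∈ G' i, v ≠ u i → ∀ w, H.Adj v w → w ∈ G' i := by
    intro i v hv hvi w hvw
    rw [hG'] at hv ⊢
    exact hB.mem_componentOf_of_adj (hbg B hB) (hmemB i) hv hvi hvw
  have hroot : ∀ i ≠ ⟨0, hk⟩, S ∩ G' i = (S \ {u ⟨0, hk⟩}) ∩ G' i := by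
    intro i hi
    have hu₀ : u ⟨0, hk⟩ ∉ G' i := fun h => by
      rw [hG'] at h
      rcases componentOf_subset _ _ h with h | h
      · exact h (hmemB _)
      · exact hi (huinj h).symm
    rw [Set.sdiff_inter_right_comm, Set.sdiff_singleton_eq_self fun h => hu₀ h.2]
  refine ⟨fun i hi => hroot i hi ▸ hpm.inter_or_diff (hclosed i), ?_⟩
  intro hdom i _ v hvG hvSG hvi
  obtain ⟨w, hwS, hvw⟩ := hdom v fun hvS => hvSG ⟨hvS, hvG⟩
  exact ⟨w, ⟨hwS, hclosed i v hvG hvi w hvw⟩, hvw⟩
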